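/- The cubical diagonal Δ_W(T, e_1∧...∧e_k) := Σ_{L⊔R={1,...,k}} (-1)^{ρ(L,R)} (T/e_L, ∧_{j∈R} e_j) ⊗ (T_R, ∧_{i∈L} e_i), where ρ(L,R) = #{(i,j) : i∈L, j∈R, i<j}, T/e_L contracts the metric edges indexed by L, and T_R makes the metric edges indexed by R non-metric, is co-associative: (Δ_W ⊗ id) ∘ Δ_W = (id ⊗ Δ_W) ∘ Δ_W. -/

import Mathlib

/-- Metric trees: planar rooted trees in which each internal edge is labeled
either *metric* or *non-metric*.  The label of the edge lying above a vertex
is stored at that vertex (`true` = metric); the flag stored at the root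
vertex is irrelevant (the root edge is not an internal edge) and is ignored
by all operations below. -/
inductive MTree : Type
  | leaf : MTree
  | node : Bool → List MTree → MTree

namespace MTree

/- The number of metric edges of a subtree, *including* its root edge. -/
mutual
  def subMetric : MTree → ℕ
    | .leaf => 0
    | .node b cs => (if b then 1 else 0) + subMetricList cs
  def subMetricList : List MTree → ℕ
    | [] => 0
    | t :: ts => subMetric t + subMetricList ts
end

/-- The number of metric edges of a metric tree.  The metric edges are
ordered by the preorder (depth-first, left-to-right) traversal, which is the
canonical ordering used to represent orientations. -/
def numMetric : MTree → ℕ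
  | .leaf => 0
  | .node _ cs => subMetricList cs

/- `contract T i` collapses the `i`-th metric edge of `T` (0-indexed in the
canonical preorder ordering of the metric edges): the vertex below the
collapsed edge is merged into the vertex above it. -/
mutual
  def csub : ℕ → MTree → List MTree
    | _, .leaf => [.leaf]
    | i, .node true cs => if i = 0 then cs else [.node true (clist (i - 1) cs)]
    | i, .node false cs => [.node false (clist i cs)]
  def clist : ℕ → List MTree → List MTree
    | _, [] => []
    | i, t :: ts =>
        if i < subMetric t then csub i t ++ ts else t :: clist (i - subMetric t) ts
end

def contract : MTree → ℕ → MTree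
  | .leaf, _ => .leaf
  | .node b cs, i => .node b (clist i cs)

/- `demote T i` changes the `i`-th metric edge of `T` (0-indexed, canonical
preorder ordering) into a non-metric edge. -/
mutual
  def dsub : ℕ → MTree → MTree
    | _, .leaf => .leaf
    | i, .node true cs => if i = 0 then .node false cs else .node true (dlist (i - 1) cs)
    | i, .node false cs => .node false (dlist i cs)
  def dlist : ℕ → List MTree → List MTree
    | _, [] => []
    | i, t :: ts =>
        if i < subMetric t then dsub i t :: ts else t :: dlist (i - subMetric t) ts
end

def demote : MTree → ℕ → MTree
  | .leaf, _ => .leaf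
  | .node b cs, i => .node b (dlist i cs)

end MTree

/-- The chains on the cubical complex `W_n`: the free `ℤ`-module spanned by
the metric trees, each taken with its canonical orientation (the preorder
ordering of its metric edges).  An oriented cell `(T, ω)` with `ω` an
arbitrary ordering of the metric edges is identified with `±1` times the
canonical basis element, the sign being the parity of `ω` relative to the
canonical ordering; this realizes the relation `(T, ω) = -(T, ω')` for
opposite orientations. -/
abbrev WChains : Type := MTree →₀ ℤ

open MTree in
/-- The boundary of an oriented cell, `∂_W(T, e_1 ∧ ... ∧ e_k) =
∑_{i=1}^{k} (-1)^i [(T/e_i, e_1 ∧ ... ê_i ... ∧ e_k) -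
(T_i, e_1 ∧ ... ê_i ... ∧ e_k)]`, written in the canonical basis (the edges
`e_1, ..., e_k` in canonical preorder; omitting `e_i` leaves the remaining
edges again in canonical preorder). -/
noncomputable def bndWCell (T : MTree) : WChains :=
  ∑ i ∈ Finset.range (numMetric T),
    ((-1 : ℤ)) ^ (i + 1) •
      (Finsupp.single (contract T i) 1 - Finsupp.single (demote T i) 1)

/-- The boundary operator `∂_W`, extended linearly. -/
noncomputable def bndW : WChains →ₗ[ℤ] WChains :=
  Finsupp.lsum ℤ fun T => LinearMap.toSpanSingleton ℤ WChains (bndWCell T)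

namespace MTree

/- `contractSet` collapses all the metric edges whose canonical preorder
index (shifted by the offset `off`) lies in the given finite set `L`. -/
mutual
  def cSetSub (L : Finset ℕ) : ℕ → MTree → List MTree
    | _, .leaf => [.leaf]
    | off, .node true cs =>
        if off ∈ L then cSetList L (off + 1) cs
        else [.node true (cSetList L (off + 1) cs)]
    | off, .node false cs => [.node false (cSetList L off cs)]
  def cSetList (L : Finset ℕ) : ℕ → List MTree → List MTree
    | _, [] => []
    | off, t :: ts => cSetSub L off t ++ cSetList L (off + subMetric t) ts
end

/-- `contractSet T L` is `T/e_L`: the tree `T` with all the metric edges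
indexed by `L` collapsed. -/
def contractSet : MTree → Finset ℕ → MTree
  | .leaf, _ => .leaf
  | .node b cs, L => .node b (cSetList L 0 cs)

/- `demoteSet` makes non-metric all the metric edges whose canonical
preorder index (shifted by the offset) lies in the given set `R`. -/
mutual
  def dSetSub (R : Finset ℕ) : ℕ → MTree → MTree
    | _, .leaf => .leaf
    | off, .node true cs => .node (¬ off ∈ R) (dSetList R (off + 1) cs)
    | off, .node false cs => .node false (dSetList R off cs)
  def dSetList (R : Finset ℕ) : ℕ → List MTree → List MTree
    | _, [] => []
    | off, t :: ts => dSetSub R off t :: dSetList R (off + subMetric t) ts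
end

/-- `demoteSet T R` is `T_R`: the tree `T` with all the metric edges indexed
by `R` changed into non-metric edges. -/
def demoteSet : MTree → Finset ℕ → MTree
  | .leaf, _ => .leaf
  | .node b cs, R => .node b (dSetList R 0 cs)

end MTree

/-- `ρ(L, R)`: the number of couples `i ∈ L`, `j ∈ R` with `i < j`, where
`R` is the complement of `L` in `{0, ..., k-1}`. -/
def rho (k : ℕ) (L : Finset ℕ) : ℕ :=
  ∑ j ∈ Finset.range k \ L, (L.filter (fun i => i < j)).card

open MTree in
/-- The cubical (Serre) diagonal on a basis cell:
`Δ_W(T, e_1 ∧ ... ∧ e_k) = ∑_{L ⊔ R = {1,...,k}} (-1)^{ρ(L,R)}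
(T/e_L, ∧_{j ∈ R} e_j) ⊗ (T_R, ∧_{i ∈ L} e_i)`, written in the canonical
basis: the metric edges surviving in each factor again appear in their
canonical preorder ordering. -/
noncomputable def diagWCell (T : MTree) : TensorProduct ℤ WChains WChains :=
  ∑ L ∈ (Finset.range (numMetric T)).powerset,
    ((-1 : ℤ)) ^ (rho (numMetric T) L) •
      (Finsupp.single (contractSet T L) (1 : ℤ) ⊗ₜ[ℤ]
       Finsupp.single (demoteSet T (Finset.range (numMetric T) \ L)) (1 : ℤ))

/-- The cubical diagonal `Δ_W`, extended linearly. -/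
noncomputable def diagW : WChains →ₗ[ℤ] TensorProduct ℤ WChains WChains :=
  Finsupp.lsum ℤ fun T =>
    LinearMap.toSpanSingleton ℤ (TensorProduct ℤ WChains WChains) (diagWCell T)


namespace MTree

/- Generalized edge operation: at each metric edge with global preorder
index `i`, `φ i = some true` contracts it, `some false` demotes it,
`none` keeps it. -/
mutual
  def opSub (φ : ℕ → Option Bool) : ℕ → MTree → List MTree
    | _, .leaf => [.leaf]
    | off, .node true cs =>
        match φ off with
        | some true => opList φ (off + 1) cs
        | some false => [.node false (opList φ (off + 1) cs)]
        | none => [.node true (opList φ (off + 1) cs)]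
    | off, .node false cs => [.node false (opList φ off cs)]
  def opList (φ : ℕ → Option Bool) : ℕ → List MTree → List MTree
    | _, [] => []
    | off, t :: ts => opSub φ off t ++ opList φ (off + subMetric t) ts
end

def op : MTree → (ℕ → Option Bool) → MTree
  | .leaf, _ => .leaf
  | .node b cs, φ => .node b (opList φ 0 cs)

def φC (L : Finset ℕ) : ℕ → Option Bool := fun i => if i ∈ L then some true else none
def φD (R : Finset ℕ) : ℕ → Option Bool := fun i => if i ∈ R then some false else none

/-- Number of `none`s of `φ` on `[a, a+m)`. -/
def cntI (φ : ℕ → Option Bool) : ℕ → ℕ → ℕ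
  | _, 0 => 0
  | a, m + 1 => (if φ a = none then 1 else 0) + cntI φ (a + 1) m

theorem cntI_succ (φ : ℕ → Option Bool) (a m : ℕ) :
    cntI φ a (m + 1) = (if φ a = none then 1 else 0) + cntI φ (a + 1) m := rfl

theorem cntI_add (φ : ℕ → Option Bool) (a m n : ℕ) :
    cntI φ a (m + n) = cntI φ a m + cntI φ (a + m) n := by
  induction m generalizing a with
  | zero => simp [cntI]
  | succ m ih =>
      have h1 : m + 1 + n = (m + n) + 1 := by omega
      rw [h1, cntI_succ, cntI_succ, ih (a + 1)]
      have h2 : a + 1 + m = a + (m + 1) := by omega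
      rw [h2]; ring

def comb (φ ψ : ℕ → Option Bool) : ℕ → Option Bool := fun i =>
  match φ i with
  | some b => some b
  | none => ψ (cntI φ 0 i)

theorem subMetricList_append (l₁ l₂ : List MTree) :
    subMetricList (l₁ ++ l₂) = subMetricList l₁ + subMetricList l₂ := by
  induction l₁ with
  | nil => simp [subMetricList]
  | cons t ts ih => rw [List.cons_append, subMetricList, subMetricList, ih, Nat.add_assoc]

mutual
theorem subMetric_opSub (φ : ℕ → Option Bool) (off : ℕ) (t : MTree) :
    subMetricList (opSub φ off t) = cntI φ off (subMetric t) := by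
  match t with
  | .leaf => simp [opSub, subMetric, subMetricList, cntI]
  | .node true cs =>
      have hL := subMetric_opList φ (off + 1) cs
      have hgoal : cntI φ off (subMetric (MTree.node true cs))
          = (if φ off = none then 1 else 0) + cntI φ (off + 1) (subMetricList cs) := by
        rw [subMetric, if_pos rfl, Nat.add_comm 1 (subMetricList cs), cntI_succ]
      rw [hgoal, opSub]
      rcases hφ : φ off with _ | _ | _ <;>
        simp [hφ, subMetricList, subMetric, subMetricList_append, hL] <;> omega
  | .node false cs =>
      have hL := subMetric_opList φ off cs
      rw [opSub]
      simp [subMetricList, subMetric, hL]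
theorem subMetric_opList (φ : ℕ → Option Bool) (off : ℕ) (cs : List MTree) :
    subMetricList (opList φ off cs) = cntI φ off (subMetricList cs) := by
  match cs with
  | [] => simp [opList, subMetricList, cntI]
  | t :: ts =>
      rw [opList, subMetricList_append, subMetric_opSub φ off t,
        subMetric_opList φ (off + subMetric t) ts, subMetricList, cntI_add]
end

theorem opList_append (ψ : ℕ → Option Bool) (c : ℕ) (l₁ l₂ : List MTree) :
    opList ψ c (l₁ ++ l₂) = opList ψ c l₁ ++ opList ψ (c + subMetricList l₁) l₂ := by
  induction l₁ generalizing c with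
  | nil => simp [opList, subMetricList]
  | cons t ts ih =>
      rw [List.cons_append, opList, opList, ih (c + subMetric t), List.append_assoc,
        subMetricList, ← Nat.add_assoc]

theorem opList_singleton (ψ : ℕ → Option Bool) (c : ℕ) (t : MTree) :
    opList ψ c [t] = opSub ψ c t := by
  rw [opList, opList, List.append_nil]

theorem cntI_add0 (φ : ℕ → Option Bool) (m n : ℕ) :
    cntI φ 0 (m + n) = cntI φ 0 m + cntI φ m n := by
  rw [cntI_add]; norm_num

theorem opSub_leaf (φ : ℕ → Option Bool) (off : ℕ) : opSub φ off .leaf = [.leaf] := by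
  rw [opSub]

theorem opSub_false (φ : ℕ → Option Bool) (off : ℕ) (cs : List MTree) :
    opSub φ off (.node false cs) = [.node false (opList φ off cs)] := by
  rw [opSub]

theorem opSub_true_none (φ : ℕ → Option Bool) (off : ℕ) (cs : List MTree)
    (h : φ off = none) : opSub φ off (.node true cs) = [.node true (opList φ (off + 1) cs)] := by
  rw [opSub, h]

theorem opSub_true_demote (φ : ℕ → Option Bool) (off : ℕ) (cs : List MTree)
    (h : φ off = some false) :
    opSub φ off (.node true cs) = [.node false (opList φ (off + 1) cs)] := by
  rw [opSub, h]

theorem opSub_true_contract (φ : ℕ → Option Bool) (off : ℕ) (cs : List MTree)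
    (h : φ off = some true) : opSub φ off (.node true cs) = opList φ (off + 1) cs := by
  rw [opSub, h]

theorem comb_none (φ ψ : ℕ → Option Bool) (i : ℕ) (h : φ i = none) :
    comb φ ψ i = ψ (cntI φ 0 i) := by simp [comb, h]

theorem comb_some (φ ψ : ℕ → Option Bool) (i : ℕ) (b : Bool) (h : φ i = some b) :
    comb φ ψ i = some b := by simp [comb, h]

mutual
theorem opSub_comb (φ ψ : ℕ → Option Bool) (off : ℕ) (t : MTree) :
    opList ψ (cntI φ 0 off) (opSub φ off t) = opSub (comb φ ψ) off t := by
  match t with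
  | .leaf => rw [opSub_leaf, opSub_leaf, opList_singleton, opSub_leaf]
  | .node true cs =>
      have hcnt : cntI φ 0 (off + 1) = cntI φ 0 off + (if φ off = none then 1 else 0) := by
        rw [cntI_add0]; simp [cntI]
      have hL := opList_comb φ ψ (off + 1) cs
      rcases hφ : φ off with _ | _ | _
      · -- φ off = none
        rw [hφ, if_pos rfl] at hcnt
        rw [hcnt] at hL
        rw [opSub_true_none φ off cs hφ, opList_singleton]
        have hc := comb_none φ ψ off hφ
        rcases hψ : ψ (cntI φ 0 off) with _ | _ | _
        · rw [opSub_true_none ψ (cntI φ 0 off) _ hψ,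
            opSub_true_none (comb φ ψ) off cs (by rw [hc, hψ]), hL]
        · rw [opSub_true_demote ψ (cntI φ 0 off) _ hψ,
            opSub_true_demote (comb φ ψ) off cs (by rw [hc, hψ]), hL]
        · rw [opSub_true_contract ψ (cntI φ 0 off) _ hψ,
            opSub_true_contract (comb φ ψ) off cs (by rw [hc, hψ]), hL]
      · -- φ off = some false
        rw [hφ, if_neg (by simp)] at hcnt; rw [Nat.add_zero] at hcnt
        rw [hcnt, Nat.add_zero] at hL
        rw [opSub_true_demote φ off cs hφ, opList_singleton, opSub_false,
          opSub_true_demote (comb φ ψ) off cs (comb_some φ ψ off false hφ), hL]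
      · -- φ off = some true
        rw [hφ, if_neg (by simp)] at hcnt; rw [Nat.add_zero] at hcnt
        rw [hcnt, Nat.add_zero] at hL
        rw [opSub_true_contract φ off cs hφ,
          opSub_true_contract (comb φ ψ) off cs (comb_some φ ψ off true hφ), hL]
  | .node false cs =>
      rw [opSub_false, opList_singleton, opSub_false, opSub_false,
        opList_comb φ ψ off cs]
theorem opList_comb (φ ψ : ℕ → Option Bool) (off : ℕ) (cs : List MTree) :
    opList ψ (cntI φ 0 off) (opList φ off cs) = opList (comb φ ψ) off cs := by
  match cs with
  | [] => rw [opList, opList, opList]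
  | t :: ts =>
      rw [opList, opList, opList_append, subMetric_opSub, opSub_comb φ ψ off t,
        ← cntI_add0, opList_comb φ ψ (off + subMetric t) ts]
end

theorem op_op (T : MTree) (φ ψ : ℕ → Option Bool) :
    op (op T φ) ψ = op T (comb φ ψ) := by
  match T with
  | .leaf => rfl
  | .node b cs =>
      rw [op, op, op]
      have := opList_comb φ ψ 0 cs
      rw [show cntI φ 0 0 = 0 from rfl] at this
      rw [this]

theorem numMetric_op (T : MTree) (φ : ℕ → Option Bool) :
    numMetric (op T φ) = cntI φ 0 (numMetric T) := by
  match T with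
  | .leaf => rfl
  | .node b cs => rw [op, numMetric, numMetric, subMetric_opList]

/- `contractSet` and `demoteSet` as instances of `op`. -/
mutual
theorem cSetSub_eq_op (L : Finset ℕ) (off : ℕ) (t : MTree) :
    cSetSub L off t = opSub (φC L) off t := by
  match t with
  | .leaf => rw [cSetSub, opSub]
  | .node true cs =>
      rw [cSetSub, opSub, cSetList_eq_op L (off + 1) cs]
      by_cases h : off ∈ L <;> simp [φC, h]
  | .node false cs => rw [cSetSub, opSub, cSetList_eq_op L off cs]
theorem cSetList_eq_op (L : Finset ℕ) (off : ℕ) (cs : List MTree) :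
    cSetList L off cs = opList (φC L) off cs := by
  match cs with
  | [] => rw [cSetList, opList]
  | t :: ts =>
      rw [cSetList, opList, cSetSub_eq_op L off t, cSetList_eq_op L (off + subMetric t) ts]
end

theorem contractSet_eq_op (T : MTree) (L : Finset ℕ) :
    contractSet T L = op T (φC L) := by
  match T with
  | .leaf => rfl
  | .node b cs => rw [contractSet, op, cSetList_eq_op]

mutual
theorem dSetSub_eq_op (R : Finset ℕ) (off : ℕ) (t : MTree) :
    [dSetSub R off t] = opSub (φD R) off t := by
  match t with
  | .leaf => rw [dSetSub, opSub]
  | .node true cs =>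
      rw [dSetSub, opSub, ← dSetList_eq_op R (off + 1) cs]
      by_cases h : off ∈ R <;> simp [φD, h]
  | .node false cs => rw [dSetSub, opSub, dSetList_eq_op R off cs]
theorem dSetList_eq_op (R : Finset ℕ) (off : ℕ) (cs : List MTree) :
    dSetList R off cs = opList (φD R) off cs := by
  match cs with
  | [] => rw [dSetList, opList]
  | t :: ts =>
      rw [dSetList, opList, ← dSetSub_eq_op R off t, dSetList_eq_op R (off + subMetric t) ts,
        List.singleton_append]
end

theorem demoteSet_eq_op (T : MTree) (R : Finset ℕ) :
    demoteSet T R = op T (φD R) := by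
  match T with
  | .leaf => rfl
  | .node b cs => rw [demoteSet, op, dSetList_eq_op]

/- `op` only depends on `φ` below the number of metric edges. -/
mutual
theorem opSub_congr (φ φ' : ℕ → Option Bool) (off : ℕ) (t : MTree)
    (h : ∀ i, off ≤ i → i < off + subMetric t → φ i = φ' i) :
    opSub φ off t = opSub φ' off t := by
  match t with
  | .leaf => rw [opSub, opSub]
  | .node true cs =>
      have hs : subMetric (MTree.node true cs) = 1 + subMetricList cs := by
        rw [subMetric, if_pos rfl]
      have hoff : φ off = φ' off := h off le_rfl (by rw [hs]; omega)
      have hcs : opList φ (off + 1) cs = opList φ' (off + 1) cs :=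
        opList_congr φ φ' (off + 1) cs (fun i h1 h2 => h i (by omega) (by rw [hs]; omega))
      rw [opSub, opSub, hoff, hcs]
  | .node false cs =>
      have hs : subMetric (MTree.node false cs) = subMetricList cs := by
        rw [subMetric]; simp
      have hcs : opList φ off cs = opList φ' off cs :=
        opList_congr φ φ' off cs (fun i h1 h2 => h i h1 (by rw [hs]; omega))
      rw [opSub, opSub, hcs]
theorem opList_congr (φ φ' : ℕ → Option Bool) (off : ℕ) (cs : List MTree)
    (h : ∀ i, off ≤ i → i < off + subMetricList cs → φ i = φ' i) :
    opList φ off cs = opList φ' off cs := by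
  match cs with
  | [] => rw [opList, opList]
  | t :: ts =>
      have hs : subMetricList (t :: ts) = subMetric t + subMetricList ts := rfl
      rw [opList, opList,
        opSub_congr φ φ' off t (fun i h1 h2 => h i h1 (by rw [hs]; omega)),
        opList_congr φ φ' (off + subMetric t) ts
          (fun i h1 h2 => h i (by omega) (by rw [hs]; omega))]
end

theorem op_congr (T : MTree) (φ φ' : ℕ → Option Bool)
    (h : ∀ i, i < numMetric T → φ i = φ' i) : op T φ = op T φ' := by
  match T with
  | .leaf => rfl
  | .node b cs =>
      rw [op, op, opList_congr φ φ' 0 cs (fun i h1 h2 => h i (by rw [numMetric]; omega))]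

end MTree

section Rank

/-- Rank of `i` inside a finite set `S` of naturals. -/
def rk (S : Finset ℕ) (i : ℕ) : ℕ := (S.filter (fun x => x < i)).card

theorem rk_lt_card {S : Finset ℕ} {i : ℕ} (hi : i ∈ S) : rk S i < S.card :=
  Finset.card_lt_card (Finset.filter_ssubset.2 ⟨i, hi, by simp⟩)

theorem rk_strictMono {S : Finset ℕ} {i j : ℕ} (hi : i ∈ S) (hij : i < j) :
    rk S i < rk S j := by
  apply Finset.card_lt_card
  have hsub : S.filter (fun x => x < i) ⊆ S.filter (fun x => x < j) :=
    by
      intro x hx; simp only [Finset.mem_filter] at hx ⊢; exact ⟨hx.1, hx.2.trans hij⟩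
  rw [Finset.ssubset_iff_of_subset hsub]
  exact ⟨i, Finset.mem_filter.2 ⟨hi, hij⟩, by simp⟩

theorem rk_lt_iff {S : Finset ℕ} {i j : ℕ} (hi : i ∈ S) (hj : j ∈ S) :
    rk S i < rk S j ↔ i < j := by
  constructor
  · intro h
    by_contra hle
    push_neg at hle
    rcases Nat.eq_or_lt_of_le hle with heq | hlt
    · rw [heq] at h; exact lt_irrefl _ h
    · exact absurd (rk_strictMono hj hlt) (by omega)
  · exact rk_strictMono hi

theorem rk_injOn {S : Finset ℕ} : Set.InjOn (rk S) S := by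
  intro i hi j hj h
  by_contra hne
  rcases Nat.lt_or_ge i j with h' | h'
  · exact absurd (rk_strictMono hi h') (by omega)
  · have h'' : j < i := by omega
    exact absurd (rk_strictMono hj h'') (by omega)

theorem rk_image (S : Finset ℕ) : S.image (rk S) = Finset.range S.card := by
  apply Finset.eq_of_subset_of_card_le
  · intro b hb
    simp only [Finset.mem_image] at hb
    obtain ⟨i, hi, rfl⟩ := hb
    exact Finset.mem_range.2 (rk_lt_card hi)
  · rw [Finset.card_range, Finset.card_image_of_injOn rk_injOn]

theorem rk_surj {S : Finset ℕ} {b : ℕ} (hb : b < S.card) : ∃ i ∈ S, rk S i = b := by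
  have : b ∈ S.image (rk S) := by rw [rk_image]; exact Finset.mem_range.2 hb
  simpa using this

theorem rk_mem_image_iff {S X : Finset ℕ} (hX : X ⊆ S) {i : ℕ} (hi : i ∈ S) :
    rk S i ∈ X.image (rk S) ↔ i ∈ X := by
  constructor
  · intro h
    simp only [Finset.mem_image] at h
    obtain ⟨x, hx, hxe⟩ := h
    rwa [← rk_injOn (hX hx) hi hxe]
  · intro h
    exact Finset.mem_image_of_mem _ h

theorem filter_rk_image {S X : Finset ℕ} (hX : X ⊆ S) :
    S.filter (fun i => rk S i ∈ X.image (rk S)) = X := by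
  ext i
  simp only [Finset.mem_filter]
  constructor
  · rintro ⟨hi, h⟩
    exact (rk_mem_image_iff hX hi).1 h
  · intro h
    exact ⟨hX h, Finset.mem_image_of_mem _ h⟩

theorem image_filter_rk {S M : Finset ℕ} (hM : M ⊆ Finset.range S.card) :
    (S.filter (fun i => rk S i ∈ M)).image (rk S) = M := by
  ext b
  simp only [Finset.mem_image, Finset.mem_filter]
  constructor
  · rintro ⟨i, ⟨_, h⟩, rfl⟩; exact h
  · intro hb
    obtain ⟨i, hi, rfl⟩ := rk_surj (Finset.mem_range.1 (hM hb))
    exact ⟨i, ⟨hi, hb⟩, rfl⟩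

theorem rk_image_filter {S X : Finset ℕ} (hX : X ⊆ S) {j : ℕ} (hj : j ∈ S) :
    rk (X.image (rk S)) (rk S j) = rk X j := by
  have h1 : X.filter (fun a => rk S a < rk S j) = X.filter (fun x => x < j) :=
    Finset.filter_congr (fun x hx => by simp [rk_lt_iff (hX hx) hj])
  have h2 : rk (X.image (rk S)) (rk S j)
      = ((X.filter (fun a => rk S a < rk S j)).image (rk S)).card := by
    rw [rk, Finset.filter_image]
  rw [h2, h1, Finset.card_image_of_injOn (rk_injOn.mono (by
    intro x hx
    simp only [Finset.coe_filter, Set.mem_setOf_eq] at hx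
    exact hX hx.1)), rk]

/-- `rho` transported through rank. -/
theorem rho_transport {S X : Finset ℕ} (hX : X ⊆ S) :
    rho S.card (X.image (rk S)) = ∑ j ∈ S \ X, rk X j := by
  unfold rho
  rw [eq_comm]
  apply Finset.sum_bij (fun j _ => rk S j)
  · intro j hj
    rw [Finset.mem_sdiff] at hj ⊢
    refine ⟨Finset.mem_range.2 (rk_lt_card hj.1), ?_⟩
    rw [rk_mem_image_iff hX hj.1]
    exact hj.2
  · intro a ha b hb h
    rw [Finset.mem_sdiff] at ha hb
    exact rk_injOn ha.1 hb.1 h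
  · intro b hb
    rw [Finset.mem_sdiff, Finset.mem_range] at hb
    obtain ⟨j, hj, rfl⟩ := rk_surj hb.1
    refine ⟨j, Finset.mem_sdiff.2 ⟨hj, fun hjX => hb.2 (Finset.mem_image_of_mem _ hjX)⟩, rfl⟩
  · intro j hj
    rw [Finset.mem_sdiff] at hj
    exact (rk_image_filter hX hj.1).symm

end Rank

section SignIdentity

/-- `N X Y` counts the pairs `i ∈ X`, `j ∈ Y` with `i < j`. -/
def pairsN (X Y : Finset ℕ) : ℕ := ∑ j ∈ Y, rk X j

theorem rho_eq_pairsN (k : ℕ) (L : Finset ℕ) : rho k L = pairsN L (Finset.range k \ L) := rfl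

theorem pairsN_union_right {X Y Z : Finset ℕ} (h : Disjoint Y Z) :
    pairsN X (Y ∪ Z) = pairsN X Y + pairsN X Z := Finset.sum_union h

theorem pairsN_union_left {X X' Y : Finset ℕ} (h : Disjoint X X') :
    pairsN (X ∪ X') Y = pairsN X Y + pairsN X' Y := by
  unfold pairsN
  rw [← Finset.sum_add_distrib]
  apply Finset.sum_congr rfl
  intro j _
  unfold rk
  rw [Finset.filter_union, Finset.card_union_of_disjoint
    (Finset.disjoint_filter_filter h)]

theorem sign_identity {k : ℕ} {C B : Finset ℕ} (hC : C ⊆ Finset.range k)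
    (hB : B ⊆ Finset.range k \ C) :
    rho k C + pairsN B ((Finset.range k \ C) \ B) =
      rho k (C ∪ B) + pairsN C B := by
  have hCc : B ∪ ((Finset.range k \ C) \ B) = Finset.range k \ C :=
    Finset.union_sdiff_of_subset hB
  have hdisj : Disjoint B ((Finset.range k \ C) \ B) := Finset.disjoint_sdiff
  have hCB : Disjoint C B :=
    Finset.disjoint_of_subset_right hB Finset.sdiff_disjoint.symm
  have h1 : rho k C = pairsN C B + pairsN C ((Finset.range k \ C) \ B) := by
    rw [rho_eq_pairsN, ← pairsN_union_right hdisj, hCc]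
  have h2 : Finset.range k \ (C ∪ B) = (Finset.range k \ C) \ B := by
    rw [← Finset.sup_eq_union, ← sdiff_sdiff_left]
  have h3 : rho k (C ∪ B) = pairsN C ((Finset.range k \ C) \ B)
      + pairsN B ((Finset.range k \ C) \ B) := by
    rw [rho_eq_pairsN, h2, pairsN_union_left hCB]
  omega

end SignIdentity


section TreeEq

open MTree

theorem φC_none {C : Finset ℕ} {j : ℕ} (h : j ∉ C) : φC C j = none := by simp [φC, h]
theorem φC_some {C : Finset ℕ} {j : ℕ} (h : j ∈ C) : φC C j = some true := by simp [φC, h]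
theorem φD_none {R : Finset ℕ} {j : ℕ} (h : j ∉ R) : φD R j = none := by simp [φD, h]
theorem φD_some {R : Finset ℕ} {j : ℕ} (h : j ∈ R) : φD R j = some false := by simp [φD, h]

theorem cntI_eq_card (φ : ℕ → Option Bool) (m : ℕ) :
    cntI φ 0 m = ((Finset.range m).filter (fun j => φ j = none)).card := by
  induction m with
  | zero => simp [cntI]
  | succ m ih =>
      have h1 : cntI φ 0 (m + 1) = cntI φ 0 m + cntI φ m 1 := cntI_add0 φ m 1
      have h2 : cntI φ m 1 = if φ m = none then 1 else 0 := by simp [cntI]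
      rw [h1, h2, ih, Finset.range_add_one, Finset.filter_insert]
      split_ifs with h
      · rw [Finset.card_insert_of_notMem (fun hm => by
          have := Finset.mem_range.1 (Finset.mem_filter.1 hm).1
          omega)]
      · omega

theorem cnt_phiC {C : Finset ℕ} {k i : ℕ} (hik : i ≤ k) :
    cntI (φC C) 0 i = rk (Finset.range k \ C) i := by
  rw [cntI_eq_card, rk]
  apply congrArg Finset.card
  ext j
  rw [Finset.mem_filter, Finset.mem_filter]
  simp only [Finset.mem_filter, Finset.mem_range, Finset.mem_sdiff, φC]
  constructor
  · rintro ⟨h1, h2⟩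
    by_cases hj : j ∈ C
    · simp [hj] at h2
    · exact ⟨⟨by omega, hj⟩, h1⟩
  · rintro ⟨⟨h1, h2⟩, h3⟩
    exact ⟨h3, by simp [h2]⟩

theorem cnt_phiD {L : Finset ℕ} {k i : ℕ} (hik : i ≤ k) :
    cntI (φD (Finset.range k \ L)) 0 i = rk L i := by
  rw [cntI_eq_card, rk]
  congr 1
  ext j
  simp only [Finset.mem_filter, Finset.mem_range, Finset.mem_sdiff, φD]
  constructor
  · rintro ⟨h1, h2⟩
    by_cases hj : j < k ∧ j ∉ L
    · rw [if_pos hj] at h2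
      exact absurd h2 (by simp)
    · push_neg at hj
      exact ⟨hj (by omega), h1⟩
  · rintro ⟨h1, h2⟩
    exact ⟨h2, if_neg (fun hc => hc.2 h1)⟩

theorem numMetric_contractSet (T : MTree) {C : Finset ℕ}
    (hC : C ⊆ Finset.range (numMetric T)) :
    numMetric (contractSet T C) = numMetric T - C.card := by
  rw [contractSet_eq_op, numMetric_op, cnt_phiC (le_refl (numMetric T)), rk,
    Finset.filter_true_of_mem (fun j hj => by
      simp only [Finset.mem_sdiff, Finset.mem_range] at hj; exact hj.1),
    Finset.card_sdiff_of_subset hC, Finset.card_range]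

theorem numMetric_demoteSet_compl (T : MTree) {L : Finset ℕ}
    (hL : L ⊆ Finset.range (numMetric T)) :
    numMetric (demoteSet T (Finset.range (numMetric T) \ L)) = L.card := by
  rw [demoteSet_eq_op, numMetric_op, cnt_phiD (le_refl (numMetric T)), rk,
    Finset.filter_true_of_mem (fun j hj => by
      simpa using Finset.mem_range.1 (hL hj))]

/-- `B`: the subset of `range k \ C` whose ranks form `L'`. -/
def Bset (k : ℕ) (C L' : Finset ℕ) : Finset ℕ :=
  (Finset.range k \ C).filter (fun i => rk (Finset.range k \ C) i ∈ L')

theorem Bset_subset (k : ℕ) (C L' : Finset ℕ) : Bset k C L' ⊆ Finset.range k \ C :=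
  Finset.filter_subset _ _

theorem mem_Bset {k : ℕ} {C L' : Finset ℕ} {i : ℕ} :
    i ∈ Bset k C L' ↔ i ∈ Finset.range k \ C ∧ rk (Finset.range k \ C) i ∈ L' :=
  Finset.mem_filter

theorem contract_contract (T : MTree) (C L' : Finset ℕ) :
    contractSet (contractSet T C) L'
      = contractSet T (C ∪ Bset (numMetric T) C L') := by
  rw [contractSet_eq_op, contractSet_eq_op, op_op, contractSet_eq_op]
  apply op_congr
  intro i hik
  by_cases hiC : i ∈ C
  · rw [comb_some _ _ _ _ (φC_some hiC), φC_some (Finset.mem_union_left _ hiC)]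
  · rw [comb_none _ _ _ (φC_none hiC), cnt_phiC (Nat.le_of_lt hik)]
    have hiCc : i ∈ Finset.range (numMetric T) \ C := by
      simp [Finset.mem_sdiff, Finset.mem_range, hik, hiC]
    by_cases hr : rk (Finset.range (numMetric T) \ C) i ∈ L'
    · rw [φC_some hr, φC_some (Finset.mem_union_right _ (mem_Bset.2 ⟨hiCc, hr⟩))]
    · have hnB : i ∉ C ∪ Bset (numMetric T) C L' := by
        simp only [Finset.mem_union]
        push_neg
        exact ⟨hiC, fun h => hr (mem_Bset.1 h).2⟩
      rw [φC_none hr, φC_none hnB]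

theorem demote_contract (T : MTree) (C L' : Finset ℕ)
    (hC : C ⊆ Finset.range (numMetric T)) :
    demoteSet (contractSet T C) (Finset.range (numMetric T - C.card) \ L')
      = contractSet
          (demoteSet T (Finset.range (numMetric T) \ (C ∪ Bset (numMetric T) C L')))
          (C.image (rk (C ∪ Bset (numMetric T) C L'))) := by
  rw [contractSet_eq_op, demoteSet_eq_op, demoteSet_eq_op, contractSet_eq_op,
    op_op, op_op]
  apply op_congr
  intro i hik
  have hCsub : C ⊆ C ∪ Bset (numMetric T) C L' := Finset.subset_union_left
  by_cases hiC : i ∈ C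
  · have hiL₂ : i ∈ C ∪ Bset (numMetric T) C L' := hCsub hiC
    have hnot : i ∉ Finset.range (numMetric T) \ (C ∪ Bset (numMetric T) C L') := by
      simp only [Finset.mem_sdiff]
      push_neg
      intro _
      exact hiL₂
    rw [comb_some _ _ _ _ (φC_some hiC), comb_none _ _ _ (φD_none hnot),
      cnt_phiD (Nat.le_of_lt hik), φC_some ((rk_mem_image_iff hCsub hiL₂).2 hiC)]
  · have hiCc : i ∈ Finset.range (numMetric T) \ C := by
      simp [Finset.mem_sdiff, Finset.mem_range, hik, hiC]
    rw [comb_none _ _ _ (φC_none hiC), cnt_phiC (Nat.le_of_lt hik)]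
    have hrk_lt : rk (Finset.range (numMetric T) \ C) i < numMetric T - C.card := by
      have h := rk_lt_card hiCc
      rwa [Finset.card_sdiff_of_subset hC, Finset.card_range] at h
    by_cases hr : rk (Finset.range (numMetric T) \ C) i ∈ L'
    · -- i ∈ B : none on both sides
      have hiB : i ∈ Bset (numMetric T) C L' := mem_Bset.2 ⟨hiCc, hr⟩
      have hiL₂ : i ∈ C ∪ Bset (numMetric T) C L' := Finset.mem_union_right _ hiB
      have h1 : rk (Finset.range (numMetric T) \ C) i
          ∉ Finset.range (numMetric T - C.card) \ L' := by
        simp only [Finset.mem_sdiff]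
        push_neg
        exact fun _ => hr
      have h2 : i ∉ Finset.range (numMetric T) \ (C ∪ Bset (numMetric T) C L') := by
        simp only [Finset.mem_sdiff]
        push_neg
        exact fun _ => hiL₂
      have h3 : rk (C ∪ Bset (numMetric T) C L') i
          ∉ C.image (rk (C ∪ Bset (numMetric T) C L')) := by
        rw [rk_mem_image_iff hCsub hiL₂]
        exact hiC
      rw [φD_none h1, comb_none _ _ _ (φD_none h2), cnt_phiD (Nat.le_of_lt hik),
        φC_none h3]
    · -- i ∉ L₂ : some false on both sides
      have hiB : i ∉ Bset (numMetric T) C L' := fun h => hr (mem_Bset.1 h).2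
      have hiL₂ : i ∉ C ∪ Bset (numMetric T) C L' := by
        simp only [Finset.mem_union]
        push_neg
        exact ⟨hiC, hiB⟩
      have h1 : rk (Finset.range (numMetric T) \ C) i
          ∈ Finset.range (numMetric T - C.card) \ L' := by
        simp only [Finset.mem_sdiff, Finset.mem_range]
        exact ⟨hrk_lt, hr⟩
      have h2 : i ∈ Finset.range (numMetric T) \ (C ∪ Bset (numMetric T) C L') := by
        simp only [Finset.mem_sdiff, Finset.mem_range]
        exact ⟨hik, hiL₂⟩
      rw [φD_some h1, comb_some _ _ _ _ (φD_some h2)]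

theorem demote_demote (T : MTree) (C L' : Finset ℕ)
    (hC : C ⊆ Finset.range (numMetric T)) :
    demoteSet T (Finset.range (numMetric T) \ C)
      = demoteSet
          (demoteSet T (Finset.range (numMetric T) \ (C ∪ Bset (numMetric T) C L')))
          (Finset.range (C ∪ Bset (numMetric T) C L').card \
            (C.image (rk (C ∪ Bset (numMetric T) C L')))) := by
  rw [demoteSet_eq_op, demoteSet_eq_op, demoteSet_eq_op, op_op]
  apply op_congr
  intro i hik
  have hCsub : C ⊆ C ∪ Bset (numMetric T) C L' := Finset.subset_union_left
  by_cases hiC : i ∈ C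
  · -- none on both sides
    have hiL₂ : i ∈ C ∪ Bset (numMetric T) C L' := hCsub hiC
    have h0 : i ∉ Finset.range (numMetric T) \ C := by
      simp only [Finset.mem_sdiff]
      push_neg
      exact fun _ => hiC
    have h2 : i ∉ Finset.range (numMetric T) \ (C ∪ Bset (numMetric T) C L') := by
      simp only [Finset.mem_sdiff]
      push_neg
      exact fun _ => hiL₂
    have h3 : rk (C ∪ Bset (numMetric T) C L') i
        ∉ Finset.range (C ∪ Bset (numMetric T) C L').card \
          (C.image (rk (C ∪ Bset (numMetric T) C L'))) := by
      simp only [Finset.mem_sdiff]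
      push_neg
      intro _
      rw [rk_mem_image_iff hCsub hiL₂]
      exact hiC
    rw [φD_none h0, comb_none _ _ _ (φD_none h2), cnt_phiD (Nat.le_of_lt hik),
      φD_none h3]
  · -- some false on both sides
    have h0 : i ∈ Finset.range (numMetric T) \ C := by
      simp only [Finset.mem_sdiff, Finset.mem_range]
      exact ⟨hik, hiC⟩
    rw [φD_some h0]
    by_cases hiL₂ : i ∈ C ∪ Bset (numMetric T) C L'
    · have h2 : i ∉ Finset.range (numMetric T) \ (C ∪ Bset (numMetric T) C L') := by
        simp only [Finset.mem_sdiff]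
        push_neg
        exact fun _ => hiL₂
      have h3 : rk (C ∪ Bset (numMetric T) C L') i
          ∈ Finset.range (C ∪ Bset (numMetric T) C L').card \
            (C.image (rk (C ∪ Bset (numMetric T) C L'))) := by
        simp only [Finset.mem_sdiff, Finset.mem_range]
        refine ⟨rk_lt_card hiL₂, ?_⟩
        rw [rk_mem_image_iff hCsub hiL₂]
        exact hiC
      rw [comb_none _ _ _ (φD_none h2), cnt_phiD (Nat.le_of_lt hik), φD_some h3]
    · have h2 : i ∈ Finset.range (numMetric T) \ (C ∪ Bset (numMetric T) C L') := by
        simp only [Finset.mem_sdiff, Finset.mem_range]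
        exact ⟨hik, hiL₂⟩
      rw [comb_some _ _ _ _ (φD_some h2)]

end TreeEq


set_option synthInstance.maxHeartbeats 1000000
set_option maxHeartbeats 2000000

section Assembly

open MTree

theorem diagW_single (T : MTree) : diagW (Finsupp.single T (1 : ℤ)) = diagWCell T := by
  rw [diagW, Finsupp.lsum_single, LinearMap.toSpanSingleton_apply, one_smul]

private theorem key (T : MTree) :
    (TensorProduct.assoc ℤ WChains WChains WChains)
        ((TensorProduct.map diagW LinearMap.id) (diagWCell T)) =
      (TensorProduct.map LinearMap.id diagW) (diagWCell T) := by
  have lhs_eq :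
      (TensorProduct.assoc ℤ WChains WChains WChains)
          ((TensorProduct.map diagW LinearMap.id) (diagWCell T)) =
      ∑ C ∈ (Finset.range (numMetric T)).powerset,
        ∑ L' ∈ (Finset.range (numMetric (contractSet T C))).powerset,
          (((-1 : ℤ)) ^ (rho (numMetric T) C) *
            ((-1 : ℤ)) ^ (rho (numMetric (contractSet T C)) L')) •
          (Finsupp.single (contractSet (contractSet T C) L') (1 : ℤ) ⊗ₜ[ℤ]
            (Finsupp.single (demoteSet (contractSet T C)
                (Finset.range (numMetric (contractSet T C)) \ L')) (1 : ℤ) ⊗ₜ[ℤ]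
             Finsupp.single (demoteSet T (Finset.range (numMetric T) \ C)) (1 : ℤ))) := by
    rw [diagWCell, map_sum]
    erw [map_sum (TensorProduct.assoc ℤ WChains WChains WChains)]
    refine Finset.sum_congr rfl (fun C _ => ?_)
    rw [map_smul]
    erw [map_smul]
    rw [TensorProduct.map_tmul, LinearMap.id_coe, id_eq, diagW_single,
      diagWCell, TensorProduct.sum_tmul]
    erw [map_sum (TensorProduct.assoc ℤ WChains WChains WChains)]
    rw [Finset.smul_sum]
    refine Finset.sum_congr rfl (fun L' _ => ?_)
    rw [← TensorProduct.smul_tmul']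
    erw [map_smul, TensorProduct.assoc_tmul]
    rw [smul_smul]
    rfl
  have rhs_eq :
      (TensorProduct.map LinearMap.id diagW) (diagWCell T) =
      ∑ L₂ ∈ (Finset.range (numMetric T)).powerset,
        ∑ M ∈ (Finset.range (numMetric
            (demoteSet T (Finset.range (numMetric T) \ L₂)))).powerset,
          (((-1 : ℤ)) ^ (rho (numMetric T) L₂) *
            ((-1 : ℤ)) ^ (rho (numMetric
              (demoteSet T (Finset.range (numMetric T) \ L₂))) M)) •
          (Finsupp.single (contractSet T L₂) (1 : ℤ) ⊗ₜ[ℤ]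
            (Finsupp.single (contractSet
                (demoteSet T (Finset.range (numMetric T) \ L₂)) M) (1 : ℤ) ⊗ₜ[ℤ]
             Finsupp.single (demoteSet
                (demoteSet T (Finset.range (numMetric T) \ L₂))
                (Finset.range (numMetric
                  (demoteSet T (Finset.range (numMetric T) \ L₂))) \ M)) (1 : ℤ))) := by
    rw [diagWCell, map_sum]
    refine Finset.sum_congr rfl (fun L₂ _ => ?_)
    rw [map_smul, TensorProduct.map_tmul, LinearMap.id_coe, id_eq, diagW_single,
      diagWCell, TensorProduct.tmul_sum, Finset.smul_sum]
    refine Finset.sum_congr rfl (fun M _ => ?_)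
    haveI : TensorProduct.CompatibleSMul ℤ ℤ WChains (TensorProduct ℤ WChains WChains) := by
      exact TensorProduct.CompatibleSMul.int
    rw [TensorProduct.tmul_smul, smul_smul]
  rw [lhs_eq, rhs_eq, Finset.sum_sigma', Finset.sum_sigma']
  apply Finset.sum_bij (fun (p : (_ : Finset ℕ) × Finset ℕ) _ =>
    (⟨p.1 ∪ Bset (numMetric T) p.1 p.2,
      p.1.image (rk (p.1 ∪ Bset (numMetric T) p.1 p.2))⟩ : (_ : Finset ℕ) × Finset ℕ))
  · -- maps into the target index set
    rintro ⟨C, L'⟩ hp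
    rw [Finset.mem_sigma, Finset.mem_powerset, Finset.mem_powerset] at hp
    obtain ⟨hC, _⟩ := hp
    have hBsub := Bset_subset (numMetric T) C L'
    have hL₂sub : C ∪ Bset (numMetric T) C L' ⊆ Finset.range (numMetric T) :=
      Finset.union_subset hC (hBsub.trans (Finset.sdiff_subset))
    rw [Finset.mem_sigma, Finset.mem_powerset, Finset.mem_powerset]
    refine ⟨hL₂sub, ?_⟩
    rw [numMetric_demoteSet_compl T hL₂sub]
    intro b hb
    obtain ⟨c, hc, rfl⟩ := Finset.mem_image.1 hb
    exact Finset.mem_range.2 (rk_lt_card (Finset.mem_union_left _ hc))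
  · -- injectivity
    rintro ⟨C₁, L₁'⟩ hp₁ ⟨C₂, L₂'⟩ hp₂ h
    rw [Finset.mem_sigma, Finset.mem_powerset, Finset.mem_powerset] at hp₁ hp₂
    obtain ⟨hC₁, hL₁⟩ := hp₁
    obtain ⟨hC₂, hL₂⟩ := hp₂
    have hfst : C₁ ∪ Bset (numMetric T) C₁ L₁' = C₂ ∪ Bset (numMetric T) C₂ L₂' :=
      congrArg Sigma.fst h
    have hsnd : C₁.image (rk (C₁ ∪ Bset (numMetric T) C₁ L₁'))
        = C₂.image (rk (C₂ ∪ Bset (numMetric T) C₂ L₂')) :=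
      congrArg (fun p : (_ : Finset ℕ) × Finset ℕ => p.2) h
    have e1 : (C₁ ∪ Bset (numMetric T) C₁ L₁').filter
        (fun i => rk (C₁ ∪ Bset (numMetric T) C₁ L₁') i
          ∈ C₁.image (rk (C₁ ∪ Bset (numMetric T) C₁ L₁'))) = C₁ :=
      filter_rk_image Finset.subset_union_left
    have e2 : (C₂ ∪ Bset (numMetric T) C₂ L₂').filter
        (fun i => rk (C₂ ∪ Bset (numMetric T) C₂ L₂') i
          ∈ C₂.image (rk (C₂ ∪ Bset (numMetric T) C₂ L₂'))) = C₂ :=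
      filter_rk_image Finset.subset_union_left
    have eC : C₁ = C₂ := by rw [← e1, hsnd, hfst, e2]
    subst eC
    have hdisj1 : Disjoint C₁ (Bset (numMetric T) C₁ L₁') :=
      Finset.disjoint_of_subset_right (Bset_subset _ _ _) Finset.sdiff_disjoint.symm
    have hdisj2 : Disjoint C₁ (Bset (numMetric T) C₁ L₂') :=
      Finset.disjoint_of_subset_right (Bset_subset _ _ _) Finset.sdiff_disjoint.symm
    have hB12 : Bset (numMetric T) C₁ L₁' = Bset (numMetric T) C₁ L₂' := by
      calc Bset (numMetric T) C₁ L₁'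
          = (C₁ ∪ Bset (numMetric T) C₁ L₁') \ C₁ :=
            (Finset.union_sdiff_cancel_left hdisj1).symm
        _ = (C₁ ∪ Bset (numMetric T) C₁ L₂') \ C₁ := by rw [hfst]
        _ = Bset (numMetric T) C₁ L₂' := Finset.union_sdiff_cancel_left hdisj2
    have hcardCc : (Finset.range (numMetric T) \ C₁).card = numMetric T - C₁.card := by
      rw [Finset.card_sdiff_of_subset hC₁, Finset.card_range]
    have hnum1 : numMetric (contractSet T C₁) = numMetric T - C₁.card :=
      numMetric_contractSet T hC₁
    have him1 : (Bset (numMetric T) C₁ L₁').image (rk (Finset.range (numMetric T) \ C₁))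
        = L₁' := by
      unfold Bset
      exact image_filter_rk (by rw [hcardCc, ← hnum1]; exact hL₁)
    have him2 : (Bset (numMetric T) C₁ L₂').image (rk (Finset.range (numMetric T) \ C₁))
        = L₂' := by
      unfold Bset
      exact image_filter_rk (by rw [hcardCc, ← hnum1]; exact hL₂)
    have : L₁' = L₂' := by rw [← him1, hB12, him2]
    rw [this]
  · -- surjectivity
    rintro ⟨L₂, M⟩ hq
    rw [Finset.mem_sigma, Finset.mem_powerset, Finset.mem_powerset] at hq
    obtain ⟨hL₂, hM⟩ := hq
    rw [numMetric_demoteSet_compl T hL₂] at hM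
    refine ⟨⟨L₂.filter (fun i => rk L₂ i ∈ M),
      (L₂ \ (L₂.filter (fun i => rk L₂ i ∈ M))).image
        (rk (Finset.range (numMetric T) \ (L₂.filter (fun i => rk L₂ i ∈ M))))⟩, ?_, ?_⟩
    · -- membership
      have hCsub : L₂.filter (fun i => rk L₂ i ∈ M) ⊆ Finset.range (numMetric T) :=
        (Finset.filter_subset _ _).trans hL₂
      rw [Finset.mem_sigma, Finset.mem_powerset, Finset.mem_powerset]
      refine ⟨hCsub, ?_⟩
      rw [numMetric_contractSet T hCsub]
      intro b hb
      obtain ⟨j, hj, rfl⟩ := Finset.mem_image.1 hb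
      rw [Finset.mem_sdiff] at hj
      have hjCc : j ∈ Finset.range (numMetric T) \ (L₂.filter (fun i => rk L₂ i ∈ M)) :=
        Finset.mem_sdiff.2 ⟨hL₂ hj.1, hj.2⟩
      have := rk_lt_card hjCc
      rwa [Finset.card_sdiff_of_subset hCsub, Finset.card_range, ← Finset.mem_range] at this
    · -- maps back
      have hB0sub : L₂ \ (L₂.filter (fun i => rk L₂ i ∈ M))
          ⊆ Finset.range (numMetric T) \ (L₂.filter (fun i => rk L₂ i ∈ M)) := by
        intro j hj
        rw [Finset.mem_sdiff] at hj ⊢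
        exact ⟨hL₂ hj.1, hj.2⟩
      have hBeq : Bset (numMetric T) (L₂.filter (fun i => rk L₂ i ∈ M))
          ((L₂ \ (L₂.filter (fun i => rk L₂ i ∈ M))).image
            (rk (Finset.range (numMetric T) \ (L₂.filter (fun i => rk L₂ i ∈ M)))))
          = L₂ \ (L₂.filter (fun i => rk L₂ i ∈ M)) := by
        unfold Bset
        exact filter_rk_image hB0sub
      have hunion : (L₂.filter (fun i => rk L₂ i ∈ M))
          ∪ (L₂ \ (L₂.filter (fun i => rk L₂ i ∈ M))) = L₂ :=
        Finset.union_sdiff_of_subset (Finset.filter_subset _ _)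
      have himage : (L₂.filter (fun i => rk L₂ i ∈ M)).image (rk L₂) = M :=
        image_filter_rk hM
      simp only [hBeq, hunion, himage]
  · -- values agree
    rintro ⟨C, L'⟩ hp
    rw [Finset.mem_sigma, Finset.mem_powerset, Finset.mem_powerset] at hp
    obtain ⟨hC, hL'⟩ := hp
    have hBsub := Bset_subset (numMetric T) C L'
    have hL₂sub : C ∪ Bset (numMetric T) C L' ⊆ Finset.range (numMetric T) :=
      Finset.union_subset hC (hBsub.trans (Finset.sdiff_subset))
    have hnum1 : numMetric (contractSet T C) = numMetric T - C.card :=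
      numMetric_contractSet T hC
    have hnum2 : numMetric (demoteSet T
        (Finset.range (numMetric T) \ (C ∪ Bset (numMetric T) C L')))
        = (C ∪ Bset (numMetric T) C L').card :=
      numMetric_demoteSet_compl T hL₂sub
    have hcardCc : (Finset.range (numMetric T) \ C).card = numMetric T - C.card := by
      rw [Finset.card_sdiff_of_subset hC, Finset.card_range]
    rw [hnum1] at hL'
    have him : (Bset (numMetric T) C L').image (rk (Finset.range (numMetric T) \ C))
        = L' := by
      unfold Bset
      exact image_filter_rk (by rw [hcardCc]; exact hL')
    have hdisj : Disjoint C (Bset (numMetric T) C L') :=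
      Finset.disjoint_of_subset_right hBsub Finset.sdiff_disjoint.symm
    have h1 : rho (numMetric T - C.card) L'
        = pairsN (Bset (numMetric T) C L')
            ((Finset.range (numMetric T) \ C) \ Bset (numMetric T) C L') := by
      calc rho (numMetric T - C.card) L'
          = rho ((Finset.range (numMetric T) \ C).card)
              ((Bset (numMetric T) C L').image (rk (Finset.range (numMetric T) \ C))) := by
            rw [him, hcardCc]
        _ = ∑ j ∈ (Finset.range (numMetric T) \ C) \ Bset (numMetric T) C L',
              rk (Bset (numMetric T) C L') j := rho_transport hBsub
        _ = _ := rfl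
    have h2 : rho ((C ∪ Bset (numMetric T) C L').card)
        (C.image (rk (C ∪ Bset (numMetric T) C L')))
        = pairsN C (Bset (numMetric T) C L') := by
      calc rho ((C ∪ Bset (numMetric T) C L').card)
            (C.image (rk (C ∪ Bset (numMetric T) C L')))
          = ∑ j ∈ (C ∪ Bset (numMetric T) C L') \ C, rk C j :=
            rho_transport Finset.subset_union_left
        _ = ∑ j ∈ Bset (numMetric T) C L', rk C j := by
            rw [Finset.union_sdiff_cancel_left hdisj]
        _ = _ := rfl
    have hexp : rho (numMetric T) C + rho (numMetric T - C.card) L'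
        = rho (numMetric T) (C ∪ Bset (numMetric T) C L')
          + rho ((C ∪ Bset (numMetric T) C L').card)
              (C.image (rk (C ∪ Bset (numMetric T) C L'))) := by
      rw [h1, h2]
      exact sign_identity hC hBsub
    have hsign : ((-1 : ℤ)) ^ (rho (numMetric T) C)
          * ((-1 : ℤ)) ^ (rho (numMetric T - C.card) L')
        = ((-1 : ℤ)) ^ (rho (numMetric T) (C ∪ Bset (numMetric T) C L'))
          * ((-1 : ℤ)) ^ (rho ((C ∪ Bset (numMetric T) C L').card)
              (C.image (rk (C ∪ Bset (numMetric T) C L')))) := by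
      rw [← pow_add, ← pow_add, hexp]
    rw [hnum1, hnum2, hsign, contract_contract T C L', demote_contract T C L' hC,
      demote_demote T C L' hC]

end Assembly


/-- The cubical diagonal `Δ_W` is co-associative:
`(Δ_W ⊗ id) ∘ Δ_W = (id ⊗ Δ_W) ∘ Δ_W`. -/
theorem diagW_coassoc (x : WChains) :
    (TensorProduct.assoc ℤ WChains WChains WChains)
        ((TensorProduct.map diagW LinearMap.id) (diagW x)) =
      (TensorProduct.map LinearMap.id diagW) (diagW x) := by
  induction x using Finsupp.induction_linear with
  | zero => simp; exact map_zero _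
  | add f g hf hg =>
    simp only [map_add, hf, hg]
    erw [map_add, hf, hg]
    rfl
  | single T c =>
      have hc : Finsupp.single T c = c • Finsupp.single T (1 : ℤ) := by
        rw [Finsupp.smul_single, smul_eq_mul, mul_one]
      rw [hc]
      simp only [map_smul, diagW_single]
      erw [map_smul, map_smul, map_smul, key T]
      rfl
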